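/- arXiv:1903.11595 — 4 statements merged into one kernel-verified Lean document; each statement's English description precedes it below -/
import Mathlib

section
/- Let f : S¹ → S¹ be a C² expanding map of degree d ≥ 2, and suppose there is λ > 1 such that every periodic point p of f with fⁿ(p) = p satisfies |Dfⁿ(p)| = λⁿ. If for each n the circle decomposes into dⁿ maximal intervals of injectivity I_{n,1},…,I_{n,dⁿ} of fⁿ, each containing a fixed point of fⁿ, and the bounded distortion estimate (1/C)|Dfⁿ(p_{n,j})|·|I_{n,j}| ≤ 1 ≤ C|Dfⁿ(p_{n,j})|·|I_{n,j}| holds with a constant C independent of n and j, then 1/C ≤ dⁿ/λⁿ ≤ C for all n ≥ 1, and consequently λ = d. -/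
/-! Each normalised length `λⁿ |I_{n,j}|` lies in `[1/C, C]`, and these `dⁿ` numbers sum to `λⁿ`,
so `dⁿ/λⁿ ∈ [1/C, C]`. A positive ratio whose powers stay in a fixed compact subinterval of
`(0, ∞)` must equal `1`. -/

open Filter Finset

lemma card_div_mem_Icc_of_sum_eq_one {ι : Type*} {s : Finset ι} {ℓ : ι → ℝ} {L C : ℝ}
    (hL : 0 < L) (hC : 0 < C) (hsum : ∑ j ∈ s, ℓ j = 1)
    (hbound : ∀ j ∈ s, 1 / C * L * ℓ j ≤ 1 ∧ 1 ≤ C * L * ℓ j) :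
    (#s : ℝ) / L ∈ Set.Icc (1 / C) C := by
  have hscaled : ∀ j ∈ s, 1 / C ≤ L * ℓ j ∧ L * ℓ j ≤ C := by
    intro j hj
    obtain ⟨hupper, hlower⟩ := hbound j hj
    constructor
    · rw [div_le_iff₀ hC]; linarith
    · calc L * ℓ j = C * (1 / C * L * ℓ j) := by field_simp
        _ ≤ C * 1 := by gcongr
        _ = C := mul_one C
  have hsum_scaled : ∑ j ∈ s, L * ℓ j = L := by rw [← mul_sum, hsum, mul_one]
  have hlow : #s • (1 / C) ≤ L :=
    hsum_scaled ▸ card_nsmul_le_sum s _ _ fun j hj => (hscaled j hj).1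
  have hhigh : L ≤ #s • C :=
    hsum_scaled ▸ sum_le_card_nsmul s _ _ fun j hj => (hscaled j hj).2
  rw [nsmul_eq_mul] at hlow hhigh
  constructor
  · rw [div_le_div_iff₀ hC hL]
    linarith
  · rw [mul_one_div, div_le_iff₀ hC] at hlow
    rw [div_le_iff₀ hL]
    linarith

lemma eq_one_of_forall_pow_mem_Icc {x C : ℝ} (hC : 0 < C)
    (h : ∀ n, 1 ≤ n → x ^ n ∈ Set.Icc (1 / C) C) : x = 1 := by
  have hx : 0 < x := lt_of_lt_of_le (one_div_pos.mpr hC) (by simpa using (h 1 le_rfl).1)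
  have hbounds : ∀ᶠ n in atTop, x ^ n ∈ Set.Icc (1 / C) C :=
    eventually_atTop.mpr ⟨1, h⟩
  rcases lt_trichotomy x 1 with hlt | heq | hgt
  · have hlim := tendsto_pow_atTop_nhds_zero_of_lt_one hx.le hlt
    have := ge_of_tendsto hlim (hbounds.mono fun _ hn => hn.1)
    exact absurd this (not_le.mpr (one_div_pos.mpr hC))
  · exact heq
  · obtain ⟨n, hn, hbig⟩ :=
      (hbounds.and ((tendsto_pow_atTop_atTop_of_one_lt hgt).eventually_gt_atTop C)).exists
    exact absurd hn.2 (not_le.mpr hbig)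

theorem stmt2_general (d : ℕ) (lam C : ℝ) (hlam : 1 < lam) (hC : 1 ≤ C)
    (len : ℕ → ℕ → ℝ)
    (hcover : ∀ n, 1 ≤ n → (∑ j ∈ Finset.range (d ^ n), len n j) = 1)
    (hdist : ∀ n j, 1 ≤ n → j < d ^ n →
      (1 / C) * lam ^ n * len n j ≤ 1 ∧ 1 ≤ C * lam ^ n * len n j) :
    (∀ n, 1 ≤ n → 1 / C ≤ (d : ℝ) ^ n / lam ^ n ∧ (d : ℝ) ^ n / lam ^ n ≤ C) ∧
    lam = (d : ℝ) := by
  have hlam0 : 0 < lam := by linarith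
  have hC0 : 0 < C := by linarith
  have hratio : ∀ n, 1 ≤ n → (d : ℝ) ^ n / lam ^ n ∈ Set.Icc (1 / C) C := fun n hn => by
    simpa using card_div_mem_Icc_of_sum_eq_one (pow_pos hlam0 n) hC0 (hcover n hn)
      fun j hj => hdist n j hn (mem_range.mp hj)
  refine ⟨hratio, ?_⟩
  have hone : (d : ℝ) / lam = 1 :=
    eq_one_of_forall_pow_mem_Icc hC0 fun n hn => div_pow (d : ℝ) lam n ▸ hratio n hn
  exact ((div_eq_one_iff_eq hlam0.ne').mp hone).symm

/-- Rigidity of the exponent for an expanding circle map of degree `d` with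
constant periodic data `|Dfⁿ(p)| = λⁿ`.  The circle is partitioned (for each
`n ≥ 1`) into `dⁿ` maximal intervals of injectivity `I_{n,j}` (of lengths
`len n j` summing to `1`), each containing a fixed point `p_{n,j}` of `fⁿ`,
and bounded distortion gives `(1/C)·λⁿ·|I_{n,j}| ≤ 1 ≤ C·λⁿ·|I_{n,j}|`.
Then `1/C ≤ dⁿ/λⁿ ≤ C` for all `n ≥ 1`, and consequently `λ = d`. -/
theorem stmt2 (d : ℕ) (hd : 2 ≤ d) (lam C : ℝ) (hlam : 1 < lam) (hC : 1 ≤ C)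
    (len : ℕ → ℕ → ℝ)
    (hpos : ∀ n j, 1 ≤ n → j < d ^ n → 0 < len n j)
    (hcover : ∀ n, 1 ≤ n → (∑ j ∈ Finset.range (d ^ n), len n j) = 1)
    (hdist : ∀ n j, 1 ≤ n → j < d ^ n →
      (1 / C) * lam ^ n * len n j ≤ 1 ∧ 1 ≤ C * lam ^ n * len n j) :
    (∀ n, 1 ≤ n → 1 / C ≤ (d : ℝ) ^ n / lam ^ n ∧ (d : ℝ) ^ n / lam ^ n ≤ C) ∧
    lam = (d : ℝ) :=
  stmt2_general d lam C hlam hC len hcover hdist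
end

section
/- Let h : S¹ → S¹ be a homeomorphism conjugating two maps, and suppose there is a constant C ≥ 1 and, for each n, a finite cover of S¹ by intervals {I_{n,j}} with max_j |I_{n,j}| → 0 as n → ∞, such that (1/C) ≤ |h(I_{n,j})|/|I_{n,j}| ≤ C for all n, j. Then h is bi-Lipschitz with Lipschitz constants C (for h) and C (for h⁻¹). -/
/-!
The two bounds say exactly that `x ↦ h x - x / C` and `x ↦ C * x - h x` are monotone.
Along each partition this is the distortion hypothesis; since the partition points of mesh
tending to `0` approximate every point of `[0, 1]` from above and `h` is continuous, monotonicity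
passes to the limit on `[0, 1]`, and `h (x + 1) = h x + 1` propagates it to all of `ℝ`.
-/

open Set Filter Topology

-- By `Nat.sInf_empty` this is `0` when no `t j` lies above `z`.
noncomputable def ceilIndex (t : ℕ → ℝ) (z : ℝ) : ℕ := sInf {j | z ≤ t j}

section ceilIndex

variable {t : ℕ → ℝ} {z w : ℝ} {N : ℕ}

theorem le_ceilIndex (hN : z ≤ t N) : z ≤ t (ceilIndex t z) :=
  Nat.sInf_mem (s := {j | z ≤ t j}) ⟨N, hN⟩

theorem ceilIndex_le (hN : z ≤ t N) : ceilIndex t z ≤ N :=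
  Nat.sInf_le hN

theorem ceilIndex_mono (hzw : z ≤ w) (hN : w ≤ t N) : ceilIndex t z ≤ ceilIndex t w :=
  Nat.sInf_le ((le_ceilIndex hN).trans' hzw)

theorem ceilIndex_sub_lt {ε : ℝ} (hε : 0 < ε) (h0 : t 0 ≤ z) (hN : z ≤ t N)
    (hstep : ∀ j < N, t (j + 1) - t j < ε) : t (ceilIndex t z) - z < ε := by
  rcases hi : ceilIndex t z with _ | k
  · linarith
  · have hk : t k < z := by
      have : k < ceilIndex t z := hi ▸ k.lt_succ_self
      simpa using Nat.notMem_of_lt_sInf this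
    have hkN : k + 1 ≤ N := hi ▸ ceilIndex_le hN
    linarith [hstep k hkN]

end ceilIndex

theorem tendsto_ceilIndex {N : ℕ → ℕ} {t : ℕ → ℕ → ℝ} {a b z : ℝ}
    (ht0 : ∀ n, t n 0 = a) (ht1 : ∀ n, t n (N n) = b)
    (hmesh : ∀ ε : ℝ, 0 < ε → ∃ M : ℕ, ∀ n ≥ M, ∀ j < N n, t n (j + 1) - t n j < ε)
    (hz : z ∈ Icc a b) :
    Tendsto (fun n ↦ t n (ceilIndex (t n) z)) atTop (𝓝 z) := by
  refine Metric.tendsto_atTop.2 fun ε hε ↦ ?_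
  obtain ⟨M, hM⟩ := hmesh ε hε
  refine ⟨M, fun n hn ↦ ?_⟩
  have hle := le_ceilIndex (N := N n) ((ht1 n).symm ▸ hz.2)
  have hlt := ceilIndex_sub_lt hε ((ht0 n).symm ▸ hz.1) ((ht1 n).symm ▸ hz.2) (hM n hn)
  rw [Real.dist_eq, abs_of_nonneg (sub_nonneg.2 hle)]
  exact hlt

theorem monotoneOn_Icc_of_partitions {f : ℝ → ℝ} (hf : Continuous f) {N : ℕ → ℕ}
    {t : ℕ → ℕ → ℝ} {a b : ℝ} (ht0 : ∀ n, t n 0 = a) (ht1 : ∀ n, t n (N n) = b)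
    (hmesh : ∀ ε : ℝ, 0 < ε → ∃ M : ℕ, ∀ n ≥ M, ∀ j < N n, t n (j + 1) - t n j < ε)
    (hstep : ∀ n, ∀ j < N n, f (t n j) ≤ f (t n (j + 1))) :
    MonotoneOn f (Icc a b) := by
  have hchain : ∀ n j k, j ≤ k → k ≤ N n → f (t n j) ≤ f (t n k) := by
    intro n j k hjk
    induction k, hjk using Nat.le_induction with
    | base => exact fun _ ↦ le_rfl
    | succ k _ ih => exact fun hk ↦ (ih (Nat.le_of_succ_le hk)).trans (hstep n k hk)
  intro x hx y hy hxy
  refine le_of_tendsto_of_tendsto ((hf.tendsto x).comp (tendsto_ceilIndex ht0 ht1 hmesh hx))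
    ((hf.tendsto y).comp (tendsto_ceilIndex ht0 ht1 hmesh hy)) (Eventually.of_forall fun n ↦ ?_)
  have hyN : y ≤ t n (N n) := (ht1 n).symm ▸ hy.2
  exact hchain n _ _ (ceilIndex_mono hxy hyN) (ceilIndex_le hyN)

theorem monotone_of_monotoneOn_Icc_of_map_add_one {f : ℝ → ℝ} {c : ℝ}
    (hf : MonotoneOn f (Icc 0 1)) (hadd : ∀ x, f (x + 1) = f x + c) : Monotone f := by
  have hc : 0 ≤ c := by
    have := hf (by simp) (by simp) zero_le_one
    rw [← zero_add (1 : ℝ), hadd] at this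
    linarith
  have hperiodic : Function.Periodic (fun x ↦ f x - c * x) 1 := fun x ↦ by
    simp only [hadd]; ring
  have hfloor : ∀ x, f x = f (Int.fract x) + ⌊x⌋ * c := fun x ↦ by
    have := (hperiodic.int_mul ⌊x⌋) (Int.fract x)
    simp only [mul_one, Int.fract_add_floor] at this
    rw [Int.fract] at this ⊢; linear_combination this
  have hfract : ∀ x, Int.fract x ∈ Icc (0 : ℝ) 1 :=
    fun x ↦ ⟨Int.fract_nonneg x, (Int.fract_lt_one x).le⟩
  intro x y hxy
  rcases (Int.floor_mono hxy).eq_or_lt with heq | hlt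
  · rw [hfloor x, hfloor y, heq]
    gcongr
    exact hf (hfract x) (hfract y) (by rw [Int.fract, Int.fract, heq]; linarith)
  · have hlt' : (⌊x⌋ : ℝ) + 1 ≤ ⌊y⌋ := by exact_mod_cast Int.add_one_le_iff.2 hlt
    calc f x = f (Int.fract x) + ⌊x⌋ * c := hfloor x
      _ ≤ f 1 + ⌊x⌋ * c := by gcongr; exact hf (hfract x) (by simp) (hfract x).2
      _ = f 0 + (⌊x⌋ + 1) * c := by rw [← zero_add (1 : ℝ), hadd]; ring
      _ ≤ f 0 + ⌊y⌋ * c := by gcongr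
      _ ≤ f (Int.fract y) + ⌊y⌋ * c := by gcongr; exact hf (by simp) (hfract y) (hfract y).1
      _ = f y := (hfloor y).symm

theorem abs_sub_bounds_of_monotone {h : ℝ → ℝ} {C : ℝ} (hC : 0 ≤ C)
    (hlow : Monotone fun x ↦ h x - x / C) (hup : Monotone fun x ↦ C * x - h x) (x y : ℝ) :
    1 / C * |x - y| ≤ |h x - h y| ∧ |h x - h y| ≤ C * |x - y| := by
  wlog hxy : x ≤ y generalizing x y
  · rw [abs_sub_comm x, abs_sub_comm (h x)]
    exact this y x (le_of_not_ge hxy)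
  have h₁ := hlow hxy
  have h₂ := hup hxy
  simp only at h₁ h₂
  have hdiv : (y - x) / C ≤ h y - h x := by rw [sub_div]; linarith
  have hnonneg : 0 ≤ h y - h x := (div_nonneg (sub_nonneg.2 hxy) hC).trans hdiv
  rw [abs_sub_comm, abs_of_nonneg (sub_nonneg.2 hxy), abs_sub_comm, abs_of_nonneg hnonneg,
    one_div_mul_eq_div]
  exact ⟨hdiv, by linarith⟩

theorem stmt3_general (h : ℝ → ℝ) (hcont : Continuous h)
    (hper : ∀ x : ℝ, h (x + 1) = h x + 1)
    (C : ℝ) (hC : 1 ≤ C) (N : ℕ → ℕ)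
    (t : ℕ → ℕ → ℝ)
    (ht0 : ∀ n, t n 0 = 0) (ht1 : ∀ n, t n (N n) = 1)
    (htmono : ∀ n, ∀ j < N n, t n j < t n (j + 1))
    (hratio : ∀ n, ∀ j < N n,
      1 / C ≤ (h (t n (j + 1)) - h (t n j)) / (t n (j + 1) - t n j) ∧
      (h (t n (j + 1)) - h (t n j)) / (t n (j + 1) - t n j) ≤ C)
    (hmesh : ∀ ε : ℝ, 0 < ε → ∃ M : ℕ, ∀ n ≥ M, ∀ j < N n,
      t n (j + 1) - t n j < ε) :
    ∀ x y : ℝ, (1 / C) * |x - y| ≤ |h x - h y| ∧ |h x - h y| ≤ C * |x - y| := by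
  have hCpos : 0 < C := zero_lt_one.trans_le hC
  have hstep : ∀ n, ∀ j < N n,
      (t n (j + 1) - t n j) / C ≤ h (t n (j + 1)) - h (t n j) ∧
      h (t n (j + 1)) - h (t n j) ≤ C * (t n (j + 1) - t n j) := fun n j hj ↦ by
    have hd := sub_pos.2 (htmono n j hj)
    obtain ⟨hlow, hup⟩ := hratio n j hj
    rw [le_div_iff₀ hd, one_div_mul_eq_div] at hlow
    rw [div_le_iff₀ hd] at hup
    exact ⟨hlow, hup⟩
  have hlow : Monotone fun x ↦ h x - x / C := by
    refine monotone_of_monotoneOn_Icc_of_map_add_one (c := 1 - 1 / C)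
      (monotoneOn_Icc_of_partitions (by fun_prop) ht0 ht1 hmesh fun n j hj ↦ ?_) fun x ↦ ?_
    · have := (hstep n j hj).1
      rw [sub_div] at this
      linarith
    · rw [hper, add_div]; ring
  have hup : Monotone fun x ↦ C * x - h x := by
    refine monotone_of_monotoneOn_Icc_of_map_add_one (c := C - 1)
      (monotoneOn_Icc_of_partitions (by fun_prop) ht0 ht1 hmesh fun n j hj ↦ ?_) fun x ↦ ?_
    · linarith [(hstep n j hj).2]
    · rw [hper]; ring
  exact abs_sub_bounds_of_monotone hCpos.le hlow hup

/-- If a circle homeomorphism `h` (modelled by its increasing lift with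
`h (x+1) = h x + 1`) distorts the lengths of the intervals of finer and finer
partitions `0 = t n 0 < t n 1 < ⋯ < t n (N n) = 1` (with mesh tending to `0`)
by a factor at most `C`, then `h` is bi-Lipschitz with constant `C`. -/
theorem stmt3 (h : ℝ → ℝ) (hmono : StrictMono h) (hcont : Continuous h)
    (hper : ∀ x : ℝ, h (x + 1) = h x + 1)
    (C : ℝ) (hC : 1 ≤ C) (N : ℕ → ℕ) (hN : ∀ n, 1 ≤ N n)
    (t : ℕ → ℕ → ℝ)
    (ht0 : ∀ n, t n 0 = 0) (ht1 : ∀ n, t n (N n) = 1)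
    (htmono : ∀ n, ∀ j < N n, t n j < t n (j + 1))
    (hratio : ∀ n, ∀ j < N n,
      1 / C ≤ (h (t n (j + 1)) - h (t n j)) / (t n (j + 1) - t n j) ∧
      (h (t n (j + 1)) - h (t n j)) / (t n (j + 1) - t n j) ≤ C)
    (hmesh : ∀ ε : ℝ, 0 < ε → ∃ M : ℕ, ∀ n ≥ M, ∀ j < N n,
      t n (j + 1) - t n j < ε) :
    ∀ x y : ℝ, (1 / C) * |x - y| ≤ |h x - h y| ∧ |h x - h y| ≤ C * |x - y| :=
  stmt3_general h hcont hper C hC N t ht0 ht1 htmono hratio hmesh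
end

section
/- Let M be a compact metric space, f : M → M continuous, and φ : M → ℝ continuous. Suppose ∫ φ dμ < λ for every f-invariant Borel probability measure μ. Then for every x ∈ M there exists n(x) ≥ 1 such that (1/n(x)) ∑_{i=0}^{n(x)-1} φ(fⁱ(x)) < λ. -/
open MeasureTheory Filter Topology Finset
open scoped ENNReal BoundedContinuousFunction

/-! If all Birkhoff averages of `φ` along the orbit of `x` were `≥ λ`, a weak limit point of
the empirical measures `(1/n) ∑_{i<n} δ_{fⁱ x}` (one exists because the probability measures on
a compact space form a compact space) would be an `f`-invariant probability measure with
`∫ φ ≥ λ`. Invariance is the Krylov–Bogolyubov argument: `∫ g ∘ f - ∫ g` against the `n`-th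
empirical measure telescopes to `(g (fⁿ x) - g x) / n`. -/

section BirkhoffMeasure

variable {M : Type*} [MeasurableSpace M] (f : M → M) (x : M)

noncomputable def birkhoffMeasure (n : ℕ) : Measure M :=
  (n : ℝ≥0∞)⁻¹ • ∑ i ∈ range n, Measure.dirac (f^[i] x)

lemma isProbabilityMeasure_birkhoffMeasure {n : ℕ} (hn : n ≠ 0) :
    IsProbabilityMeasure (birkhoffMeasure f x n) := by
  constructor
  simp [birkhoffMeasure, ENNReal.inv_mul_cancel (Nat.cast_ne_zero.2 hn) (ENNReal.natCast_ne_top n)]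

lemma integral_birkhoffMeasure [MeasurableSingletonClass M] (g : M → ℝ) (n : ℕ) :
    ∫ y, g y ∂birkhoffMeasure f x n = 1 / (n : ℝ) * ∑ i ∈ range n, g (f^[i] x) := by
  rw [birkhoffMeasure, integral_smul_measure,
    integral_finsetSum_measure fun i _ => integrable_dirac enorm_lt_top]
  simp [integral_dirac]

lemma integral_comp_sub_integral_birkhoffMeasure [MeasurableSingletonClass M] (g : M → ℝ)
    (n : ℕ) :
    ∫ y, g (f y) ∂birkhoffMeasure f x n - ∫ y, g y ∂birkhoffMeasure f x n
      = (g (f^[n] x) - g x) / n := by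
  simp only [integral_birkhoffMeasure, ← Function.iterate_succ_apply' f, ← mul_sub,
    ← sum_sub_distrib, sum_range_sub (fun i => g (f^[i] x)), Function.iterate_zero_apply]
  ring

lemma tendsto_integral_comp_sub_integral_birkhoffMeasure [MeasurableSingletonClass M]
    [TopologicalSpace M] (g : M →ᵇ ℝ) :
    Tendsto (fun n => ∫ y, g (f y) ∂birkhoffMeasure f x n - ∫ y, g y ∂birkhoffMeasure f x n)
      atTop (𝓝 0) := by
  simp_rw [integral_comp_sub_integral_birkhoffMeasure]
  refine squeeze_zero_norm (fun n => ?_) (tendsto_const_div_atTop_nhds_zero_nat (2 * ‖g‖))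
  rw [norm_div, Real.norm_natCast]
  exact div_le_div_of_nonneg_right (g.dist_le_two_norm _ _) n.cast_nonneg

noncomputable def birkhoffProbabilityMeasure (n : ℕ) : ProbabilityMeasure M :=
  ⟨birkhoffMeasure f x (n + 1), isProbabilityMeasure_birkhoffMeasure f x n.succ_ne_zero⟩

end BirkhoffMeasure

theorem measurePreserving_of_tendsto_birkhoffProbabilityMeasure {M : Type*} [MetricSpace M]
    [MeasurableSpace M] [BorelSpace M] {f : M → M} (hf : Continuous f) {x : M}
    {l : Filter ℕ} [l.NeBot] (hl : l ≤ atTop) {μ : ProbabilityMeasure M}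
    (hμ : Tendsto (birkhoffProbabilityMeasure f x) l (𝓝 μ)) :
    MeasurePreserving f μ μ := by
  refine ⟨hf.measurable, ext_of_forall_integral_eq_of_IsFiniteMeasure fun g => ?_⟩
  rw [integral_map hf.aemeasurable g.continuous.aestronglyMeasurable]
  have hlim (h : M →ᵇ ℝ) :
      Tendsto (fun n => ∫ y, h y ∂birkhoffMeasure f x (n + 1)) l (𝓝 (∫ y, h y ∂μ)) :=
    ((ProbabilityMeasure.continuous_integral_boundedContinuousFunction h).tendsto μ).comp hμ
  have hdiff := (hlim (g.compContinuous ⟨f, hf⟩)).sub (hlim g)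
  have hzero := ((tendsto_integral_comp_sub_integral_birkhoffMeasure f x g).comp
    (tendsto_add_atTop_nat 1)).mono_left hl
  exact sub_eq_zero.1 (tendsto_nhds_unique hdiff hzero)

/-- If `∫ φ dμ < λ` for every `f`-invariant Borel probability measure `μ` on a
compact metric space `M`, then every point `x` has some Birkhoff average of
`φ` strictly below `λ`. -/
theorem stmt4 {M : Type*} [MetricSpace M] [CompactSpace M]
    [MeasurableSpace M] [BorelSpace M]
    (f : M → M) (hf : Continuous f) (φ : M → ℝ) (hφ : Continuous φ) (lam : ℝ)
    (hint : ∀ μ : Measure M, IsProbabilityMeasure μ →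
      MeasurePreserving f μ μ → (∫ x, φ x ∂μ) < lam) :
    ∀ x : M, ∃ n : ℕ, 1 ≤ n ∧
      (1 / (n : ℝ)) * ∑ i ∈ Finset.range n, φ (f^[i] x) < lam := by
  intro x
  by_contra! hge
  obtain ⟨μ, -, hμ⟩ := isCompact_univ.ultrafilter_le_nhds
    ((Ultrafilter.of atTop).map (birkhoffProbabilityMeasure f x)) (by simp)
  have hinv := measurePreserving_of_tendsto_birkhoffProbabilityMeasure hf (Ultrafilter.of_le _) hμ
  have hφμ : lam ≤ ∫ y, φ y ∂μ := by
    have hcont := ProbabilityMeasure.continuous_integral_boundedContinuousFunction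
      (BoundedContinuousFunction.mkOfCompact ⟨φ, hφ⟩)
    refine ge_of_tendsto ((hcont.tendsto μ).comp hμ) (Eventually.of_forall fun n => ?_)
    simpa [birkhoffProbabilityMeasure, integral_birkhoffMeasure] using hge (n + 1) (by omega)
  exact (hint μ inferInstance hinv).not_ge hφμ
end

section
/- Let f : M → M be a continuous map of a compact metric space with the specification property, and let φ : M → ℝ be continuous. If p and q are periodic points with distinct Birkhoff averages α = lim (1/n)∑φ(fⁱ(p)) < β = lim (1/n)∑φ(fⁱ(q)), then there exists a point z ∈ M and subsequences n_k → ∞, m_k → ∞ such that (1/n_k)∑_{i=0}^{n_k−1} φ(fⁱ(z)) → α and (1/m_k)∑_{i=0}^{m_k−1} φ(fⁱ(z)) → β; in particular, the Birkhoff average of φ at z does not exist. -/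
/-!
Glue together, by specification, longer and longer orbit segments of `p` and `q` alternately,
each new segment so long that the transition time and all earlier history are negligible
against it. Specification only gives `ε`-shadowing for a fixed `ε`, so the point is built as a
limit: at stage `s` we shadow, with precision `2⁻ˢ`, the whole orbit segment of the stage-`s`
point followed by the next periodic segment. The orbit of the limit point then follows each
periodic segment with error tending to zero, so by uniform continuity of `φ` its Birkhoff
averages at the ends of the `p`-segments tend to `α` and at the ends of the `q`-segments to `β`.
-/

open Filter

/-- The specification property: for every `ε > 0` there is a relaxation time
`N` such that any finite collection of orbit segments `x_i, …, f^[k i] x_i`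
(`i < r`) can be `ε`-shadowed by a single orbit, with gaps bounded by `N`. -/
def SpecificationProperty {M : Type*} [MetricSpace M] (f : M → M) : Prop :=
  ∀ ε : ℝ, 0 < ε → ∃ N : ℕ, ∀ (r : ℕ) (x : ℕ → M) (k : ℕ → ℕ),
    ∃ (a : ℕ → ℕ) (z : M),
      (∀ i, i + 1 < r → a i ≤ a (i + 1) ∧ a (i + 1) ≤ a i + k i + N) ∧
      (∀ i < r, ∀ j ≤ k i, dist (f^[a i + j] z) (f^[j] (x i)) < ε)

open Function

section Birkhoff

variable {α : Type*} {f : α → α}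

theorem Function.IsPeriodicPt.birkhoffSum_mul {M : Type*} [AddCommMonoid M] {m : ℕ} {x : α}
    (hx : IsPeriodicPt f m x) (g : α → M) (k : ℕ) :
    birkhoffSum f g (m * k) x = k • birkhoffSum f g m x := by
  induction k with
  | zero => simp
  | succ k ih => rw [Nat.mul_succ, birkhoffSum_add, (hx.mul_const k).eq, ih, succ_nsmul]

variable {φ : α → ℝ} {C : ℝ}

theorem abs_birkhoffSum_le (hC : ∀ y, |φ y| ≤ C) (n : ℕ) (x : α) :
    |birkhoffSum f φ n x| ≤ n * C :=
  (Finset.abs_sum_le_sum_abs _ _).trans <| by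
    simpa using Finset.sum_le_card_nsmul (Finset.range n) _ C fun i _ => hC (f^[i] x)

theorem abs_birkhoffAverage_le (hC : ∀ y, |φ y| ≤ C) (n : ℕ) (x : α) :
    |birkhoffAverage ℝ f φ n x| ≤ C := by
  rcases n.eq_zero_or_pos with rfl | hn
  · simpa using (abs_nonneg _).trans (hC x)
  · rw [birkhoffAverage, smul_eq_mul, abs_mul, abs_inv, Nat.abs_cast,
      inv_mul_le_iff₀ (by positivity)]
    exact abs_birkhoffSum_le hC n x

theorem birkhoffSum_eq_mul_birkhoffAverage {n : ℕ} (hn : 0 < n) (x : α) :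
    birkhoffSum f φ n x = n * birkhoffAverage ℝ f φ n x := by
  rw [birkhoffAverage, smul_eq_mul, mul_inv_cancel_left₀ (by positivity)]

theorem Function.IsPeriodicPt.abs_birkhoffSum_sub_le (hC : ∀ y, |φ y| ≤ C) {m : ℕ} {x : α}
    (hx : IsPeriodicPt f m x) (hm : 0 < m) (n : ℕ) :
    |birkhoffSum f φ n x - n * birkhoffAverage ℝ f φ m x| ≤ 2 * m * C := by
  set γ := birkhoffAverage ℝ f φ m x
  obtain ⟨k, r, hr, rfl⟩ : ∃ k r, r < m ∧ n = m * k + r :=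
    ⟨n / m, n % m, Nat.mod_lt n hm, (Nat.div_add_mod n m).symm⟩
  have hsum : birkhoffSum f φ (m * k + r) x = k * (m * γ) + birkhoffSum f φ r x := by
    rw [birkhoffSum_add, (hx.mul_const k).eq, hx.birkhoffSum_mul, nsmul_eq_mul,
      birkhoffSum_eq_mul_birkhoffAverage hm]
  have hr' : (r : ℝ) ≤ m := by exact_mod_cast hr.le
  have hγ : |r * γ| ≤ r * C := by
    rw [abs_mul, Nat.abs_cast]
    exact mul_le_mul_of_nonneg_left (abs_birkhoffAverage_le hC m x) r.cast_nonneg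
  have hC0 : 0 ≤ C := (abs_nonneg _).trans (hC x)
  calc |birkhoffSum f φ (m * k + r) x - ↑(m * k + r) * γ|
      = |birkhoffSum f φ r x - r * γ| := by rw [hsum]; push_cast; ring_nf
    _ ≤ r * C + r * C := (abs_sub _ _).trans (add_le_add (abs_birkhoffSum_le hC r x) hγ)
    _ ≤ 2 * m * C := by linarith [mul_le_mul_of_nonneg_right hr' hC0]

theorem abs_birkhoffSum_add_sub_le (hC : ∀ y, |φ y| ≤ C) {m : ℕ} {x z : α}
    (hx : IsPeriodicPt f m x) (hm : 0 < m) {A K : ℕ} {δ : ℝ}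
    (hδ : ∀ j < K, |φ (f^[A + j] z) - φ (f^[j] x)| ≤ δ) :
    |birkhoffSum f φ (A + K) z - (A + K) * birkhoffAverage ℝ f φ m x|
      ≤ 2 * C * (A + m) + K * δ := by
  set γ := birkhoffAverage ℝ f φ m x
  have hhead : |birkhoffSum f φ A z| ≤ A * C := abs_birkhoffSum_le hC A z
  have hblock : |birkhoffSum f φ K (f^[A] z) - birkhoffSum f φ K x| ≤ K * δ := by
    rw [← Real.dist_eq]
    refine (dist_birkhoffSum_birkhoffSum_le f φ K _ x).trans ?_
    simpa [Real.dist_eq, ← iterate_add_apply, add_comm] using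
      Finset.sum_le_card_nsmul _ _ δ fun j hj => hδ j (Finset.mem_range.1 hj)
  have hper := hx.abs_birkhoffSum_sub_le hC hm K
  have hγ : |A * γ| ≤ A * C := by
    rw [abs_mul, Nat.abs_cast]
    exact mul_le_mul_of_nonneg_left (abs_birkhoffAverage_le hC m x) A.cast_nonneg
  calc |birkhoffSum f φ (A + K) z - (A + K) * γ|
      = |birkhoffSum f φ A z + (birkhoffSum f φ K (f^[A] z) - birkhoffSum f φ K x)
          + (birkhoffSum f φ K x - K * γ) - A * γ| := by rw [birkhoffSum_add]; ring_nf
    _ ≤ |birkhoffSum f φ A z| + |birkhoffSum f φ K (f^[A] z) - birkhoffSum f φ K x|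
          + |birkhoffSum f φ K x - K * γ| + |A * γ| :=
      (abs_sub _ _).trans (add_le_add_left (abs_add_three _ _ _) _)
    _ ≤ A * C + K * δ + 2 * m * C + A * C :=
      add_le_add (add_le_add (add_le_add hhead hblock) hper) hγ
    _ = 2 * C * (A + m) + K * δ := by ring

theorem abs_birkhoffAverage_sub_le (hC : ∀ y, |φ y| ≤ C) {m : ℕ} {x z : α}
    (hx : IsPeriodicPt f m x) (hm : 0 < m) {A L : ℕ} (hAL : A ≤ L) (hL : 0 < L) {δ : ℝ}
    (hδ0 : 0 ≤ δ) (hδ : ∀ j, A + j < L → |φ (f^[A + j] z) - φ (f^[j] x)| ≤ δ) :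
    |birkhoffAverage ℝ f φ L z - birkhoffAverage ℝ f φ m x|
      ≤ 2 * C * (A / L + m / L) + δ := by
  obtain ⟨K, rfl⟩ := Nat.exists_eq_add_of_le hAL
  have hsum := abs_birkhoffSum_add_sub_le (K := K) hC hx hm fun j hj => hδ j (by omega)
  have hL' : (0 : ℝ) < A + K := by exact_mod_cast hL
  rw [birkhoffAverage, smul_eq_mul, ← div_eq_inv_mul]
  push_cast
  rw [div_sub' hL'.ne', abs_div, abs_of_pos hL', div_le_iff₀ hL', mul_comm _ ((A : ℝ) + K)]
  calc _ ≤ 2 * C * (A + m) + K * δ := hsum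
    _ ≤ 2 * C * (A + m) + (A + K) * δ := by gcongr; linarith [A.cast_nonneg (α := ℝ)]
    _ = _ := by field_simp

theorem birkhoffAverage_eq_one_div_mul_sum (n : ℕ) (x : α) :
    birkhoffAverage ℝ f φ n x = 1 / (n : ℝ) * ∑ i ∈ Finset.range n, φ (f^[i] x) := by
  rw [birkhoffAverage, birkhoffSum, smul_eq_mul, one_div]

end Birkhoff

theorem tendsto_div_of_succ_mul_le {a b : ℕ → ℕ} (h : ∀ s, (s + 1) * a s ≤ b s) :
    Tendsto (fun s => (a s : ℝ) / b s) atTop (nhds 0) := by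
  refine squeeze_zero (fun s => by positivity) (fun s => ?_) tendsto_one_div_add_atTop_nhds_zero_nat
  rcases (b s).eq_zero_or_pos with hb | hb
  · simp only [hb, Nat.cast_zero, div_zero]; positivity
  · rw [div_le_div_iff₀ (by exact_mod_cast hb) (by positivity), one_mul, mul_comm]
    exact_mod_cast h s

section Shadowing

variable {M : Type*} [MetricSpace M] {f : M → M}

theorem SpecificationProperty.exists_two_segments (hspec : SpecificationProperty f) {ε : ℝ}
    (hε : 0 < ε) : ∃ N : ℕ, ∀ (x y : M) (k l : ℕ), ∃ (z : M) (A : ℕ), A ≤ k + N ∧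
      (∀ t ≤ k, dist (f^[t] z) (f^[t] x) < ε) ∧ ∀ j ≤ l, dist (f^[A + j] z) (f^[j] y) < ε := by
  obtain ⟨N, hN⟩ := hspec ε hε
  refine ⟨N, fun x y k l => ?_⟩
  obtain ⟨a, z, hgap, hz⟩ :=
    hN 2 (fun i => if i = 0 then x else y) (fun i => if i = 0 then k else l)
  have hgap01 : a 0 ≤ a 1 ∧ a 1 ≤ a 0 + k + N := by simpa using hgap 0 one_lt_two
  have hx : ∀ t ≤ k, dist (f^[a 0 + t] z) (f^[t] x) < ε := by simpa using hz 0 two_pos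
  have hy : ∀ j ≤ l, dist (f^[a 1 + j] z) (f^[j] y) < ε := by simpa using hz 1 one_lt_two
  refine ⟨f^[a 0] z, a 1 - a 0, by omega, fun t ht => ?_, fun j hj => ?_⟩
  · rw [← iterate_add_apply, add_comm]
    exact hx t ht
  · rw [← iterate_add_apply, show a 1 - a 0 + j + a 0 = a 1 + j by omega]
    exact hy j hj

theorem SpecificationProperty.exists_extension (hspec : SpecificationProperty f) {ε : ℝ}
    (hε : 0 < ε) (c : ℕ) (x y : M) (L : ℕ) : ∃ (z : M) (A L' : ℕ), L < L' ∧ c * A ≤ L' ∧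
      (∀ t ≤ L, dist (f^[t] z) (f^[t] x) < ε) ∧
      ∀ j, A + j ≤ L' → dist (f^[A + j] z) (f^[j] y) < ε := by
  obtain ⟨N, hN⟩ := hspec.exists_two_segments hε
  obtain ⟨z, A, hA, hx, hy⟩ := hN x y L (c * (L + N) + L + 1)
  refine ⟨z, A, A + (c * (L + N) + L + 1), by omega, ?_, hx, fun j hj => hy j (by omega)⟩
  linarith [Nat.mul_le_mul_left c hA]

theorem exists_dist_iterate_le_of_dist_iterate_succ_le [CompleteSpace M] (hf : Continuous f)
    {Z : ℕ → M} {L : ℕ → ℕ} (hL : Monotone L) {C : ℝ}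
    (hZ : ∀ s, ∀ t ≤ L s, dist (f^[t] (Z (s + 1))) (f^[t] (Z s)) ≤ C / 2 / 2 ^ s) :
    ∃ z, ∀ s, ∀ t ≤ L s, dist (f^[t] z) (f^[t] (Z s)) ≤ C / 2 ^ s := by
  obtain ⟨z, hz⟩ := cauchySeq_tendsto_of_complete <| cauchySeq_of_le_geometric_two (C := C)
    fun s => by simpa [dist_comm] using hZ s 0 (Nat.zero_le _)
  refine ⟨z, fun s t ht => ?_⟩
  have hlim : Tendsto (fun n => f^[t] (Z (n + s))) atTop (nhds (f^[t] z)) :=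
    ((hf.iterate t).tendsto z).comp (hz.comp (tendsto_add_atTop_nat s))
  have hstep : ∀ n, dist (f^[t] (Z (n + s))) (f^[t] (Z (n + 1 + s))) ≤ C / 2 ^ s / 2 / 2 ^ n := by
    intro n
    rw [dist_comm, show n + 1 + s = n + s + 1 by omega]
    refine (hZ (n + s) t (ht.trans (hL (Nat.le_add_left s n)))).trans_eq ?_
    rw [pow_add]; ring
  simpa [dist_comm] using dist_le_of_le_geometric_two_of_tendsto₀ hstep hlim

theorem SpecificationProperty.exists_shadowing_blocks [CompleteSpace M] (hf : Continuous f)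
    (hspec : SpecificationProperty f) (w : ℕ → M) :
    ∃ (z : M) (A L : ℕ → ℕ), StrictMono L ∧ (∀ s, A s ≤ L s) ∧
      Tendsto (fun s => (A s : ℝ) / L s) atTop (nhds 0) ∧
      ∀ s j, A s + j ≤ L s → dist (f^[A s + j] z) (f^[j] (w s)) ≤ 1 / 2 ^ s := by
  choose Z' A' L' hL' hA' hZ' hw' using fun s (x : M × ℕ) =>
    hspec.exists_extension (ε := 1 / 2 / 2 ^ s) (by positivity) (s + 1) x.1 (w s) x.2
  -- Stage `s` is a point together with the length of its orbit segment that later stages keep.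
  let g : ℕ → M × ℕ := fun n =>
    Nat.rec (motive := fun _ => M × ℕ) (w 0, 0) (fun s x => (Z' s x, L' s x)) n
  have hg : StrictMono fun s => (g s).2 := strictMono_nat_of_lt_succ fun s => hL' s (g s)
  obtain ⟨z, hz⟩ := exists_dist_iterate_le_of_dist_iterate_succ_le hf hg.monotone (C := 1)
    (Z := fun s => (g s).1) fun s t ht => (hZ' s (g s) t ht).le
  refine ⟨z, fun s => A' s (g s), fun s => (g (s + 1)).2, fun _ _ h => hg (Nat.succ_lt_succ h),
    fun s => (Nat.le_mul_of_pos_left _ s.succ_pos).trans (hA' s (g s)),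
    tendsto_div_of_succ_mul_le fun s => hA' s (g s), fun s j hj => ?_⟩
  calc dist (f^[A' s (g s) + j] z) (f^[j] (w s))
      ≤ dist (f^[A' s (g s) + j] z) (f^[A' s (g s) + j] (g (s + 1)).1)
        + dist (f^[A' s (g s) + j] (g (s + 1)).1) (f^[j] (w s)) := dist_triangle _ _ _
    _ ≤ 1 / 2 ^ (s + 1) + 1 / 2 / 2 ^ s := add_le_add (hz (s + 1) _ hj) (hw' s (g s) j hj).le
    _ = 1 / 2 ^ s := by rw [pow_succ]; ring

end Shadowing

theorem tendsto_birkhoffAverage_of_shadowing {M : Type*} [MetricSpace M] [CompactSpace M]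
    {f : M → M} {φ : M → ℝ} (hφ : Continuous φ) {m : ℕ} {x z : M} (hx : IsPeriodicPt f m x)
    (hm : 0 < m) {A L : ℕ → ℕ} {η : ℕ → ℝ} (hL : Tendsto L atTop atTop) (hAL : ∀ s, A s ≤ L s)
    (hA : Tendsto (fun s => (A s : ℝ) / L s) atTop (nhds 0)) (hη : Tendsto η atTop (nhds 0))
    (hz : ∀ s j, A s + j < L s → dist (f^[A s + j] z) (f^[j] x) ≤ η s) :
    Tendsto (fun s => birkhoffAverage ℝ f φ (L s) z) atTop
      (nhds (birkhoffAverage ℝ f φ m x)) := by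
  obtain ⟨C, hC⟩ := isCompact_univ.exists_bound_of_continuousOn hφ.continuousOn
  simp only [Set.mem_univ, Real.norm_eq_abs, forall_const] at hC
  rw [Metric.tendsto_atTop]
  intro ε hε
  obtain ⟨δ, hδ, hφδ⟩ := Metric.uniformContinuous_iff.1
    (CompactSpace.uniformContinuous_of_continuous hφ) (ε / 2) (half_pos hε)
  have herr : Tendsto (fun s => 2 * C * ((A s : ℝ) / L s + m / L s)) atTop (nhds 0) := by
    simpa using (hA.add (tendsto_const_nhds.div_atTop
      (tendsto_natCast_atTop_atTop.comp hL))).const_mul (2 * C)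
  obtain ⟨N, hN⟩ := eventually_atTop.1 <| (herr.eventually (gt_mem_nhds (half_pos hε))).and <|
    (hη.eventually (gt_mem_nhds hδ)).and (hL.eventually_gt_atTop 0)
  refine ⟨N, fun s hs => ?_⟩
  obtain ⟨herr_s, hη_s, hL_s⟩ := hN s hs
  have hclose : ∀ j, A s + j < L s → |φ (f^[A s + j] z) - φ (f^[j] x)| ≤ ε / 2 := fun j hj =>
    (hφδ ((hz s j hj).trans_lt hη_s)).le
  rw [Real.dist_eq]
  linarith [abs_birkhoffAverage_sub_le hC hx hm (hAL s) hL_s (half_pos hε).le hclose]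

/-- Two periodic points with distinct Birkhoff averages `α < β` of a continuous
function `φ`, for a continuous map with the specification property, produce a
point `z` whose Birkhoff averages have both `α` and `β` as subsequential
limits; in particular the Birkhoff average at `z` does not exist. -/
theorem stmt8 {M : Type*} [MetricSpace M] [CompactSpace M]
    (f : M → M) (hf : Continuous f) (hspec : SpecificationProperty f)
    (φ : M → ℝ) (hφ : Continuous φ)
    (p q : M) (mp mq : ℕ) (hmp : 1 ≤ mp) (hmq : 1 ≤ mq)
    (hp : f^[mp] p = p) (hq : f^[mq] q = q)
    (α β : ℝ)
    (hα : α = (1 / (mp : ℝ)) * ∑ i ∈ Finset.range mp, φ (f^[i] p))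
    (hβ : β = (1 / (mq : ℝ)) * ∑ i ∈ Finset.range mq, φ (f^[i] q))
    (hαβ : α < β) :
    ∃ (z : M) (n m : ℕ → ℕ), StrictMono n ∧ StrictMono m ∧
      Tendsto (fun k => (1 / (n k : ℝ)) *
        ∑ i ∈ Finset.range (n k), φ (f^[i] z)) atTop (nhds α) ∧
      Tendsto (fun k => (1 / (m k : ℝ)) *
        ∑ i ∈ Finset.range (m k), φ (f^[i] z)) atTop (nhds β) ∧
      ¬ ∃ c : ℝ, Tendsto (fun n : ℕ => (1 / (n : ℝ)) *
        ∑ i ∈ Finset.range n, φ (f^[i] z)) atTop (nhds c) := by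
  set w : ℕ → M := fun s => if Even s then p else q
  obtain ⟨z, A, L, hL, hAL, hA, hz⟩ := hspec.exists_shadowing_blocks hf w
  have hη : Tendsto (fun s => (1 : ℝ) / 2 ^ s) atTop (nhds 0) := by
    simpa only [one_div, inv_pow] using
      tendsto_pow_atTop_nhds_zero_of_lt_one (r := (2 : ℝ)⁻¹) (by norm_num) (by norm_num)
  have hsub : ∀ {x : M} {m : ℕ} {e : ℕ → ℕ}, IsPeriodicPt f m x → 0 < m → StrictMono e →
      (∀ k, w (e k) = x) → Tendsto (fun k => birkhoffAverage ℝ f φ (L (e k)) z) atTop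
        (nhds (birkhoffAverage ℝ f φ m x)) := fun hx hm he hw =>
    tendsto_birkhoffAverage_of_shadowing hφ hx hm (hL.comp he).tendsto_atTop (fun k => hAL _)
      (hA.comp he.tendsto_atTop) (hη.comp he.tendsto_atTop) fun k j hj => hw k ▸ hz _ j hj.le
  have heven : StrictMono fun k => 2 * k := strictMono_mul_left_of_pos two_pos
  have hodd : StrictMono fun k => 2 * k + 1 := fun _ _ h => by dsimp only; omega
  have hα' := hsub hp hmp heven fun k => if_pos (even_two_mul k)
  have hβ' := hsub hq hmq hodd fun k => if_neg (Nat.not_even_two_mul_add_one k)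
  simp only [birkhoffAverage_eq_one_div_mul_sum, ← hα, ← hβ] at hα' hβ'
  refine ⟨z, _, _, hL.comp heven, hL.comp hodd, hα', hβ', fun ⟨c, hc⟩ => hαβ.ne ?_⟩
  exact (tendsto_nhds_unique (hc.comp (hL.comp heven).tendsto_atTop) hα').symm.trans
    (tendsto_nhds_unique (hc.comp (hL.comp hodd).tendsto_atTop) hβ')
end
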